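/- Let M ≥ 3 be an integer and let M̂ be the (M−2)×(M−2) tridiagonal matrix with zero diagonal, superdiagonal entries M̂_{i,i+1} = i + 2 for i = 1, ..., M−3 (i.e. the superdiagonal entries are 3, 4, ..., M−1), and subdiagonal entries M̂_{i+1,i} = 1. Then the characteristic polynomial of M̂ equals Ĥe_{M−2}, i.e. det(x·I − M̂) = Ĥe_{M−2}(x). -/
import Mathlib

open Polynomial Matrix

noncomputable def Hhat : ℕ → Polynomial ℝ
  | 0 => 1
  | 1 => Polynomial.X
  | (n + 2) => Polynomial.X * Hhat (n + 1) - Polynomial.C ((n : ℝ) + 3) * Hhat n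

def triMhat (M : ℕ) : Matrix (Fin (M - 2)) (Fin (M - 2)) ℝ :=
  Matrix.of fun i j =>
    if (j : ℕ) = (i : ℕ) + 1 then ((i : ℕ) : ℝ) + 3
    else if (i : ℕ) = (j : ℕ) + 1 then 1 else 0

noncomputable def Amat (n : ℕ) : Matrix (Fin n) (Fin n) (Polynomial ℝ) :=
  Matrix.of fun i j =>
    if (i : ℕ) = (j : ℕ) then Polynomial.X
    else if (j : ℕ) = (i : ℕ) + 1 then -Polynomial.C (((i : ℕ) : ℝ) + 3)
    else if (i : ℕ) = (j : ℕ) + 1 then -1 else 0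

lemma Amat_apply (n : ℕ) (i j : Fin n) :
    Amat n i j =
      if (i : ℕ) = (j : ℕ) then Polynomial.X
      else if (j : ℕ) = (i : ℕ) + 1 then -Polynomial.C (((i : ℕ) : ℝ) + 3)
      else if (i : ℕ) = (j : ℕ) + 1 then -1 else 0 := rfl

lemma val_succAbove {n : ℕ} (p : Fin (n + 1)) (i : Fin n) :
    ((p.succAbove i : Fin (n + 1)) : ℕ) = if (i : ℕ) < (p : ℕ) then (i : ℕ) else (i : ℕ) + 1 := by
  rw [Fin.succAbove]
  split_ifs with h h' h' <;> simp_all [Fin.lt_def]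

lemma det_Amat_rec (n : ℕ) :
    (Amat (n + 2)).det =
      Polynomial.X * (Amat (n + 1)).det - Polynomial.C ((n : ℝ) + 3) * (Amat n).det := by
  rw [Matrix.det_succ_row (Amat (n + 2)) (Fin.last (n + 1))]
  rw [Fin.sum_univ_castSucc, Fin.sum_univ_castSucc]
  have hzero : ∀ j : Fin n,
      (-1 : Polynomial ℝ) ^ ((Fin.last (n+1) : ℕ) + ((j.castSucc.castSucc : Fin (n+2)) : ℕ)) *
        Amat (n + 2) (Fin.last (n+1)) j.castSucc.castSucc *
        ((Amat (n+2)).submatrix (Fin.last (n+1)).succAbove j.castSucc.castSucc.succAbove).det = 0 := by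
    intro j
    have hj : (j : ℕ) < n := j.isLt
    have : Amat (n + 2) (Fin.last (n+1)) j.castSucc.castSucc = 0 := by
      rw [Amat_apply]
      simp only [Fin.val_last, Fin.coe_castSucc]
      split_ifs <;> first | omega | rfl
    rw [this, mul_zero, zero_mul]
  rw [Finset.sum_eq_zero (fun j _ => hzero j), zero_add]
  -- the last-column term: j = last, entry X, minor = Amat (n+1)
  have hlastentry : Amat (n + 2) (Fin.last (n+1)) (Fin.last (n+1)) = Polynomial.X := by
    rw [Amat_apply]; simp
  have hminor1 : (Amat (n+2)).submatrix (Fin.last (n+1)).succAbove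
      (Fin.last (n+1)).succAbove = Amat (n+1) := by
    ext i j
    simp only [Matrix.submatrix_apply, Fin.succAbove_last, Amat_apply, Fin.coe_castSucc]
  have hsign1 : (-1 : Polynomial ℝ) ^ ((Fin.last (n+1) : ℕ) + ((Fin.last (n+1)) : ℕ)) = 1 := by
    simp only [Fin.val_last]
    exact Even.neg_one_pow ⟨n + 1, by ring⟩
  -- the subdiagonal term: j = castSucc last, entry -1
  have hsubentry : Amat (n + 2) (Fin.last (n+1)) (((Fin.last n).castSucc : Fin (n+2))) = -1 := by
    rw [Amat_apply]
    simp only [Fin.val_last, Fin.coe_castSucc]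
    split_ifs <;> first | omega | rfl
  have hsign2 : (-1 : Polynomial ℝ) ^ ((Fin.last (n+1) : ℕ) + (((Fin.last n).castSucc : Fin (n+2)) : ℕ)) = -1 := by
    simp only [Fin.val_last, Fin.coe_castSucc]
    exact Odd.neg_one_pow ⟨n, by ring⟩
  -- compute det of minor2
  have hminor2 : ((Amat (n+2)).submatrix (Fin.last (n+1)).succAbove
      ((Fin.last n).castSucc : Fin (n+2)).succAbove).det
      = -Polynomial.C ((n : ℝ) + 3) * (Amat n).det := by
    set B := (Amat (n+2)).submatrix (Fin.last (n+1)).succAbove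
      ((Fin.last n).castSucc : Fin (n+2)).succAbove with hB
    rw [Matrix.det_succ_column B (Fin.last n), Fin.sum_univ_castSucc]
    have hz : ∀ i : Fin n,
        (-1 : Polynomial ℝ) ^ (((i.castSucc : Fin (n+1)) : ℕ) + ((Fin.last n : Fin (n+1)) : ℕ)) *
          B i.castSucc (Fin.last n) *
          (B.submatrix i.castSucc.succAbove (Fin.last n).succAbove).det = 0 := by
      intro i
      have hi : (i : ℕ) < n := i.isLt
      have : B i.castSucc (Fin.last n) = 0 := by
        rw [hB]
        simp only [Matrix.submatrix_apply, Fin.succAbove_last, Amat_apply]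
        rw [show (((Fin.last n).castSucc : Fin (n+2)).succAbove (Fin.last n) : ℕ) = n + 1 by
          rw [val_succAbove]; simp]
        simp only [Fin.coe_castSucc]
        split_ifs <;> first | omega | rfl
      rw [this, mul_zero, zero_mul]
    rw [Finset.sum_eq_zero (fun i _ => hz i), zero_add]
    have hBentry : B (Fin.last n) (Fin.last n) = -Polynomial.C ((n : ℝ) + 3) := by
      rw [hB]
      simp only [Matrix.submatrix_apply, Fin.succAbove_last, Amat_apply]
      rw [show (((Fin.last n).castSucc : Fin (n+2)).succAbove (Fin.last n) : ℕ) = n + 1 by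
        rw [val_succAbove]; simp]
      simp only [Fin.coe_castSucc, Fin.val_last]
      split_ifs <;> first | omega | rfl
    have hBsign : (-1 : Polynomial ℝ) ^ (((Fin.last n : Fin (n+1)) : ℕ) + ((Fin.last n : Fin (n+1)) : ℕ)) = 1 := by
      simp only [Fin.val_last]; exact Even.neg_one_pow ⟨n, by ring⟩
    have hBsub : B.submatrix (Fin.last n).succAbove (Fin.last n).succAbove = Amat n := by
      ext i j
      have hj : (j : ℕ) < n := j.isLt
      simp only [hB, Matrix.submatrix_apply, Fin.succAbove_last, Amat_apply, Fin.coe_castSucc]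
      rw [show (((Fin.last n).castSucc : Fin (n+2)).succAbove j.castSucc : ℕ) = (j : ℕ) by
        rw [val_succAbove]; simp [Fin.coe_castSucc, hj]]
    rw [hBentry, hBsign, hBsub]
    ring
  rw [hlastentry, hminor1, hsign1, hsubentry, hsign2, hminor2]
  ring

lemma det_Amat : ∀ n : ℕ, (Amat n).det = Hhat n
  | 0 => by simp [Hhat, Matrix.det_fin_zero]
  | 1 => by
      rw [Matrix.det_fin_one, Hhat, Amat_apply]
      simp
  | (n + 2) => by
      rw [det_Amat_rec, det_Amat (n + 1), det_Amat n, Hhat]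

lemma charmatrix_tri (n : ℕ) : (triMhat (n + 2)).charmatrix = Amat n := by
  ext i j
  by_cases h : i = j
  · subst h
    rw [Matrix.charmatrix_apply_eq, Amat_apply]
    simp [triMhat]
  · rw [Matrix.charmatrix_apply_ne _ _ _ h, Amat_apply]
    have hne : (i : ℕ) ≠ (j : ℕ) := fun hv => h (Fin.ext hv)
    rw [if_neg hne]
    simp only [triMhat, Matrix.of_apply]
    split_ifs <;> simp [Polynomial.C_1]

/-- The characteristic polynomial of M̂ is Ĥe_{M−2}. -/
theorem charpoly_triMhat (M : ℕ) (hM : 3 ≤ M) :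
    (triMhat M).charpoly = Hhat (M - 2) := by
  obtain ⟨n, rfl⟩ : ∃ n, M = n + 2 := ⟨M - 2, by omega⟩
  rw [Matrix.charpoly, charmatrix_tri]
  exact det_Amat n
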